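/- arXiv:2111.14846 — 4 statements merged into one kernel-verified Lean document; each statement's English description precedes it below -/
import Mathlib

section
/- Let N ≥ 2. If (X, Y') ~ G', then E[φ_{i≠j}(X, Y')] = ε²·(2 − 2/N). -/
open MeasureTheory ProbabilityTheory Finset

noncomputable section

/-- Bit strings of length `n`; there are `N = 2^n` of them. -/
abbrev BV (n : ℕ) := Fin n → Bool

/-- Inner product (mod nothing, just the count) of two bit strings. -/
def bip {n : ℕ} (x y : BV n) : ℕ := (Finset.univ.filter fun i => x i && y i).card

/-- The `N × N` normalized Walsh-Hadamard matrix, `H_{x,y} = (-1)^{⟨x,y⟩} / √N`. -/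
def Had (n : ℕ) : Matrix (BV n) (BV n) ℝ :=
  Matrix.of fun x y => (-1 : ℝ) ^ bip x y / Real.sqrt (2 ^ n)

/-- `ε = 1 / (C ln N)` with `N = 2^n`. -/
def eps (C : ℝ) (n : ℕ) : ℝ := 1 / (C * Real.log (2 ^ n))

/-- The Gaussian vector `X` with i.i.d. `N(0, ε)` coordinates. -/
def gaussVec (C : ℝ) (n : ℕ) : Measure (BV n → ℝ) :=
  Measure.pi fun _ => gaussianReal 0 (eps C n).toNNReal

/-- The distribution `G'` of `Z = (X, Y∘Y - ε·𝟙)` with `Y = H·X`, packed as a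
function on `BV n ⊕ BV n` (first `N` coordinates are `X`, last `N` are `Y∘Y - ε`). -/
def Gmeas' (C : ℝ) (n : ℕ) : Measure (BV n ⊕ BV n → ℝ) :=
  (gaussVec C n).map fun X => Sum.elim X fun i => ((Had n).mulVec X i) ^ 2 - eps C n

/-- Truncation to `[-1, 1]`. -/
def trnc (a : ℝ) : ℝ := min 1 (max (-1) a)

/-- Randomized rounding of `a` to `±1`: output `1` with probability `(1 + trnc a)/2`
and `-1` with probability `(1 - trnc a)/2`. -/
def roundM (a : ℝ) : Measure ℝ :=
  ((1 + trnc a) / 2).toNNReal • Measure.dirac 1 +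
    ((1 - trnc a) / 2).toNNReal • Measure.dirac (-1)

/-- The distribution `D` on `{±1}^{2N}`: sample `z ~ G'` and round each coordinate
independently. -/
def Dmeas (C : ℝ) (n : ℕ) : Measure (BV n ⊕ BV n → ℝ) :=
  (Gmeas' C n).bind fun z => Measure.pi fun i => roundM (z i)

/-- `F : ℝ^ι → ℝ` is multilinear if `F z = Σ_S F̂(S) ∏_{i ∈ S} z_i`. -/
def IsMultilinear {ι : Type*} [Fintype ι] [DecidableEq ι] (F : (ι → ℝ) → ℝ) : Prop :=
  ∃ c : Finset ι → ℝ, ∀ z, F z = ∑ S : Finset ι, c S * ∏ i ∈ S, z i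

/-- The Fourier coefficient `F̂(S)` of `F` (over the hypercube `{±1}^ι`); for a
multilinear `F` these are precisely its multilinear coefficients. -/
def mlCoeff {ι : Type*} [Fintype ι] [DecidableEq ι] (F : (ι → ℝ) → ℝ) (S : Finset ι) : ℝ :=
  (∑ z : ι → Bool, F (fun i => if z i then 1 else -1) * ∏ i ∈ S, (if z i then (1 : ℝ) else -1)) /
    2 ^ Fintype.card ι

/-- `L_{1,2}(F) = Σ_{|S| = 2} |F̂(S)|`. -/
def L12 {ι : Type*} [Fintype ι] [DecidableEq ι] (F : (ι → ℝ) → ℝ) : ℝ :=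
  ∑ S ∈ Finset.univ.filter (fun S : Finset ι => S.card = 2), |mlCoeff F S|

/-- The restriction `F_ρ` of `F` under `ρ = (S, w)`: coordinates outside `S` are
fixed to the values of `w`. -/
def restrictML {ι : Type*} [DecidableEq ι] (F : (ι → ℝ) → ℝ) (S : Finset ι)
    (w : ι → ℝ) : (ι → ℝ) → ℝ :=
  fun y => F fun i => if i ∈ S then y i else w i

/-- `φ(X, Y) = (1/N) Σ_i (Σ_j H_{ij} X_j)² Y_i`. -/
def phi (n : ℕ) (X Y : BV n → ℝ) : ℝ :=
  (∑ i, ((Had n).mulVec X i) ^ 2 * Y i) / 2 ^ n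

/-- The multilinear part `φ_{i≠j}(X, Y) = (1/N) Σ_i Σ_{j ≠ k} H_{ij} H_{ik} X_j X_k Y_i`. -/
def phiOff (n : ℕ) (X Y : BV n → ℝ) : ℝ :=
  (∑ i, ∑ j, ∑ k ∈ Finset.univ \ {j}, Had n i j * Had n i k * X j * X k * Y i) / 2 ^ n

/-- The Fourier coefficient `f̂(x) = 2^{-n} Σ_y f(y) (-1)^{⟨x,y⟩}` of `f : {0,1}^n → {±1}`. -/
def hatF (n : ℕ) (f : BV n → ℝ) (x : BV n) : ℝ :=
  (∑ y, f y * (-1 : ℝ) ^ bip x y) / 2 ^ n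

/-!
Expanding `Y_i² = (∑_l H_il X_l)²`, every term of `φ_{i≠j}` becomes a combination of the
moments `E[X_j X_k X_l X_m]` and `E[X_j X_k]` with `j ≠ k` of the i.i.d. centred coordinates.
An index occurring exactly once kills a moment, so `E[X_j X_k] = 0` (the shift `-ε·𝟙` drops out)
and `E[X_j X_k X_l X_m] = ε²` exactly when `{l, m} = {j, k}`. Each off-diagonal term therefore
contributes `2ε² H_ij² H_ik²`, and `H_ij² = 1/N` turns the sum into `2ε² (N - 1) / N`.
-/

open scoped Matrix NNReal

lemma mul_mul_sq_sum_eq {ι : Type*} [Fintype ι] (x a : ι → ℝ) (j k : ι) :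
    x j * x k * (∑ l, a l * x l) ^ 2 = ∑ l, ∑ m, a l * a m * (x j * x k * x l * x m) := by
  simp_rw [sq, sum_mul_sum, mul_sum]
  exact sum_congr rfl fun l _ => sum_congr rfl fun m _ => by ring

section ProductMeasureMoments

variable {ι : Type*} [Fintype ι] [DecidableEq ι] {μ : Measure ℝ}

lemma multiset_prod_map_eq_prod_pow_count (s : Multiset ι) (x : ι → ℝ) :
    (s.map x).prod = ∏ c, x c ^ s.count c := by
  rw [prod_multiset_map_count]
  refine prod_subset (subset_univ _) fun c _ hc => ?_
  rw [Multiset.count_eq_zero.mpr (by simpa using hc), pow_zero]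

section SigmaFinite

variable [SigmaFinite μ]

lemma integrable_pi_multiset_prod (hmom : ∀ k : ℕ, Integrable (fun t => t ^ k) μ)
    (s : Multiset ι) :
    Integrable (fun x : ι → ℝ => (s.map x).prod) (Measure.pi fun _ => μ) := by
  simp_rw [multiset_prod_map_eq_prod_pow_count]
  exact Integrable.fintype_prod fun c => hmom (s.count c)

lemma integral_pi_multiset_prod (s : Multiset ι) :
    ∫ x, (s.map x).prod ∂(Measure.pi fun _ => μ) = ∏ c, ∫ t, t ^ s.count c ∂μ := by
  simp_rw [multiset_prod_map_eq_prod_pow_count]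
  exact integral_fintype_prod_eq_prod fun c t => t ^ s.count c

lemma integral_pi_multiset_prod_eq_zero (hmean : ∫ t, t ∂μ = 0) {s : Multiset ι} {c : ι}
    (hc : s.count c = 1) : ∫ x, (s.map x).prod ∂(Measure.pi fun _ => μ) = 0 := by
  rw [integral_pi_multiset_prod]
  exact prod_eq_zero (mem_univ c) (by simpa [hc] using hmean)

lemma integrable_pi_mul (hmom : ∀ k : ℕ, Integrable (fun t => t ^ k) μ) (j k : ι) :
    Integrable (fun x : ι → ℝ => x j * x k) (Measure.pi fun _ => μ) := by
  simpa using integrable_pi_multiset_prod hmom ({j, k} : Multiset ι)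

lemma integrable_pi_mul_mul_mul (hmom : ∀ k : ℕ, Integrable (fun t => t ^ k) μ)
    (j k l m : ι) :
    Integrable (fun x : ι → ℝ => x j * x k * x l * x m) (Measure.pi fun _ => μ) := by
  simpa [mul_assoc] using integrable_pi_multiset_prod hmom ({j, k, l, m} : Multiset ι)

lemma integral_pi_mul_eq_zero (hmean : ∫ t, t ∂μ = 0) {j k : ι} (hjk : j ≠ k) :
    ∫ x, x j * x k ∂(Measure.pi fun _ => μ) = 0 := by
  simpa using integral_pi_multiset_prod_eq_zero hmean (s := {j, k}) (c := j) (by simp [hjk])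

lemma integrable_pi_mul_mul_sq_sum_sub (hmom : ∀ k : ℕ, Integrable (fun t => t ^ k) μ)
    (j k : ι) (a : ι → ℝ) (c : ℝ) :
    Integrable (fun x : ι → ℝ => x j * x k * ((∑ l, a l * x l) ^ 2 - c))
      (Measure.pi fun _ => μ) := by
  simp_rw [mul_sub, mul_mul_sq_sum_eq]
  exact (integrable_finsetSum _ fun l _ => integrable_finsetSum _ fun m _ =>
    (integrable_pi_mul_mul_mul hmom j k l m).const_mul _).sub
      ((integrable_pi_mul hmom j k).mul_const c)

end SigmaFinite

variable [IsProbabilityMeasure μ]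

lemma integral_pi_mul_mul_mul (hmean : ∫ t, t ∂μ = 0) {j k : ι} (hjk : j ≠ k) (l m : ι) :
    ∫ x, x j * x k * x l * x m ∂(Measure.pi fun _ => μ) =
      (∫ t, t ^ 2 ∂μ) ^ 2 *
        ((if l = j ∧ m = k then 1 else 0) + (if l = k ∧ m = j then 1 else 0)) := by
  have hmono : ∀ x : ι → ℝ,
      x j * x k * x l * x m = (({j, k, l, m} : Multiset ι).map x).prod := by
    intro x
    simp only [Multiset.insert_eq_cons, Multiset.map_cons, Multiset.map_singleton,
      Multiset.prod_cons, Multiset.prod_singleton]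
    ring
  simp_rw [hmono]
  by_cases hpair : (l = j ∧ m = k) ∨ (l = k ∧ m = j)
  · rw [integral_pi_multiset_prod, prod_eq_mul j k hjk]
    · rcases hpair with ⟨rfl, rfl⟩ | ⟨rfl, rfl⟩ <;> simp [hjk, hjk.symm, sq]
    · rcases hpair with ⟨rfl, rfl⟩ | ⟨rfl, rfl⟩ <;> intro c _ hc <;> simp [hc]
    · simp
    · simp
  · rw [not_or] at hpair
    simp only [hpair.1, hpair.2, if_false, add_zero, mul_zero]
    by_cases hj : l ≠ j ∧ m ≠ j
    · exact integral_pi_multiset_prod_eq_zero hmean (c := j)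
        (by simp [hjk, hj.1.symm, hj.2.symm])
    · have hk : l ≠ k ∧ m ≠ k := by grind
      exact integral_pi_multiset_prod_eq_zero hmean (c := k)
        (by simp [hjk.symm, hk.1.symm, hk.2.symm])

lemma integral_pi_mul_mul_sq_sum_sub (hmom : ∀ k : ℕ, Integrable (fun t => t ^ k) μ)
    (hmean : ∫ t, t ∂μ = 0) {j k : ι} (hjk : j ≠ k) (a : ι → ℝ) (c : ℝ) :
    ∫ x, x j * x k * ((∑ l, a l * x l) ^ 2 - c) ∂(Measure.pi fun _ => μ) =
      2 * (∫ t, t ^ 2 ∂μ) ^ 2 * (a j * a k) := by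
  have hint4 : ∀ l m, Integrable (fun x : ι → ℝ => a l * a m * (x j * x k * x l * x m))
      (Measure.pi fun _ => μ) := fun l m => (integrable_pi_mul_mul_mul hmom j k l m).const_mul _
  have hint : ∀ l, Integrable (fun x : ι → ℝ => ∑ m, a l * a m * (x j * x k * x l * x m))
      (Measure.pi fun _ => μ) := fun l => integrable_finsetSum _ fun m _ => hint4 l m
  simp_rw [mul_sub, mul_mul_sq_sum_eq]
  rw [integral_sub (integrable_finsetSum _ fun l _ => hint l)
      ((integrable_pi_mul hmom j k).mul_const c), integral_mul_const,
    integral_pi_mul_eq_zero hmean hjk, zero_mul, sub_zero,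
    integral_finsetSum _ fun l _ => hint l]
  simp_rw [integral_finsetSum _ fun m _ => hint4 _ m, integral_const_mul,
    integral_pi_mul_mul_mul hmean hjk, mul_add, sum_add_distrib, ite_and]
  simp only [mul_ite, mul_one, mul_zero, sum_ite_irrel, sum_ite_eq', mem_univ, ↓reduceIte,
    sum_const_zero]
  ring

lemma integral_pi_sum_offDiag_mul_sq_mulVec_sub
    (hmom : ∀ k : ℕ, Integrable (fun t => t ^ k) μ) (hmean : ∫ t, t ∂μ = 0)
    (A : Matrix ι ι ℝ) (c : ℝ) :
    ∫ x, ∑ i, ∑ j, ∑ k ∈ univ \ {j}, A i j * A i k * x j * x k * ((A *ᵥ x) i ^ 2 - c)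
        ∂(Measure.pi fun _ => μ) =
      2 * (∫ t, t ^ 2 ∂μ) ^ 2 * ∑ i, ∑ j, ∑ k ∈ univ \ {j}, A i j ^ 2 * A i k ^ 2 := by
  have hterm : ∀ (x : ι → ℝ) i j k, A i j * A i k * x j * x k * ((A *ᵥ x) i ^ 2 - c) =
      A i j * A i k * (x j * x k * ((∑ l, A i l * x l) ^ 2 - c)) := fun x i j k => by
    simp only [Matrix.mulVec, dotProduct]
    ring
  have hint := fun i j k =>
    (integrable_pi_mul_mul_sq_sum_sub hmom j k (A i) c).const_mul (A i j * A i k)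
  simp_rw [hterm]
  rw [integral_finsetSum _ fun i _ => integrable_finsetSum _ fun j _ =>
    integrable_finsetSum _ fun k _ => hint i j k, mul_sum]
  refine sum_congr rfl fun i _ => ?_
  rw [integral_finsetSum _ fun j _ => integrable_finsetSum _ fun k _ => hint i j k, mul_sum]
  refine sum_congr rfl fun j _ => ?_
  rw [integral_finsetSum _ fun k _ => hint i j k, mul_sum]
  refine sum_congr rfl fun k hk => ?_
  have hjk : j ≠ k := by simpa [eq_comm] using hk
  rw [integral_const_mul, integral_pi_mul_mul_sq_sum_sub hmom hmean hjk]
  ring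

end ProductMeasureMoments

lemma integrable_pow_gaussianReal (m : ℝ) (v : ℝ≥0) (k : ℕ) :
    Integrable (fun t => t ^ k) (gaussianReal m v) :=
  (memLp_id_gaussianReal k).integrable_norm_pow'.mono' (by fun_prop)
    (Filter.Eventually.of_forall fun t => by simp [norm_pow])

lemma integral_sq_gaussianReal (v : ℝ≥0) : ∫ t, t ^ 2 ∂gaussianReal 0 v = v := by
  rw [← variance_of_integral_eq_zero aemeasurable_id' integral_id_gaussianReal,
    variance_fun_id_gaussianReal]

lemma eps_nonneg {C : ℝ} (hC : 0 ≤ C) (n : ℕ) : 0 ≤ eps C n :=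
  div_nonneg zero_le_one (mul_nonneg hC (Real.log_nonneg (one_le_pow₀ (by norm_num))))

lemma Had_sq (n : ℕ) (i j : BV n) : Had n i j ^ 2 = (2 ^ n)⁻¹ := by
  rw [Had, Matrix.of_apply, div_pow, Real.sq_sqrt (by positivity), ← pow_mul, mul_comm, pow_mul,
    neg_one_sq, one_pow, one_div]

lemma sum_offDiag_Had_sq_mul_sq (n : ℕ) :
    ∑ i, ∑ j, ∑ k ∈ univ \ {j}, Had n i j ^ 2 * Had n i k ^ 2 = (2 : ℝ) ^ n - 1 := by
  have hcard : Fintype.card (BV n) = 2 ^ n := by simp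
  simp only [Had_sq, sum_const, card_sdiff, card_univ, hcard, inter_univ, card_singleton,
    nsmul_eq_mul, Nat.cast_pred (Nat.two_pow_pos n), Nat.cast_pow, Nat.cast_ofNat]
  field_simp

theorem stmt3_general (C : ℝ) (hC : 20 ≤ C) (n : ℕ) :
    ∫ z, phiOff n (fun i => z (Sum.inl i)) (fun i => z (Sum.inr i)) ∂(Gmeas' C n)
      = eps C n ^ 2 * (2 - 2 / 2 ^ n) := by
  have heps := eps_nonneg (by linarith) n
  have hT : Measurable fun X : BV n → ℝ =>
      Sum.elim X fun i => (Had n *ᵥ X) i ^ 2 - eps C n := by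
    refine measurable_pi_iff.mpr ?_
    rintro (i | i)
    · exact measurable_pi_apply i
    · simp only [Sum.elim_inr, Matrix.mulVec, dotProduct]
      fun_prop
  rw [Gmeas', integral_map hT.aemeasurable (by unfold phiOff; fun_prop)]
  simp only [phiOff, Sum.elim_inl, Sum.elim_inr]
  rw [integral_div, gaussVec, integral_pi_sum_offDiag_mul_sq_mulVec_sub
      (integrable_pow_gaussianReal 0 _) integral_id_gaussianReal,
    integral_sq_gaussianReal, Real.coe_toNNReal _ heps, sum_offDiag_Had_sq_mul_sq]
  field_simp

/-- Let `N ≥ 2`. If `(X, Y') ~ G'`, then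
`E[φ_{i≠j}(X, Y')] = ε² (2 - 2/N)`. -/
theorem stmt3 (C : ℝ) (hC : 20 ≤ C) (n : ℕ) (hn : 1 ≤ n) :
    ∫ z, phiOff n (fun i => z (Sum.inl i)) (fun i => z (Sum.inr i)) ∂(Gmeas' C n)
      = eps C n ^ 2 * (2 - 2 / 2 ^ n) :=
  stmt3_general C hC n
end
end

section
/- Let F: ℝ^{2N} → ℝ be a multilinear function that maps {±1}^{2N} into [−1, 1]. Then for every z = (z_1, …, z_{2N}) ∈ ℝ^{2N}, |F(z)| ≤ ∏_{i=1}^{2N} max(1, |z_i|). -/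
open MeasureTheory ProbabilityTheory Finset

noncomputable section

lemma affine_combo {ι : Type*} [Fintype ι] [DecidableEq ι] (F : (ι → ℝ) → ℝ)
    (hF : IsMultilinear F) (z : ι → ℝ) (i : ι) (t : ℝ) :
    F (Function.update z i t) =
      (1 + t) / 2 * F (Function.update z i 1) + (1 - t) / 2 * F (Function.update z i (-1)) := by
  obtain ⟨c, hc⟩ := hF
  simp only [hc, Finset.mul_sum, ← Finset.sum_add_distrib]
  refine Finset.sum_congr rfl fun S _ => ?_
  have hgen : ∀ u : ℝ, ∀ T : Finset ι, i ∉ T →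
      ∏ j ∈ T, Function.update z i u j = ∏ j ∈ T, z j := by
    intro u T hT
    exact Finset.prod_congr rfl fun j hj =>
      Function.update_of_ne (fun h : j = i => hT (h ▸ hj)) _ _
  by_cases hi : i ∈ S
  · rw [← Finset.prod_erase_mul _ _ hi, ← Finset.prod_erase_mul _ _ hi,
        ← Finset.prod_erase_mul _ _ hi]
    simp only [hgen _ _ (Finset.notMem_erase i S), Function.update_self]
    ring
  · simp only [hgen _ _ hi]; ring

lemma abs_combo (t : ℝ) : |(1 + t) / 2| + |(1 - t) / 2| = max 1 |t| := by
  rcases le_total t 0 with h | h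
  · rcases le_total t (-1) with h' | h'
    · rw [abs_of_nonpos (by linarith), abs_of_nonneg (by linarith), abs_of_nonpos h,
        max_eq_right (by linarith)]; ring
    · rw [abs_of_nonneg (by linarith), abs_of_nonneg (by linarith),
        max_eq_left (abs_le.mpr ⟨h', by linarith⟩)]; ring
  · rcases le_total 1 t with h' | h'
    · rw [abs_of_nonneg (by linarith), abs_of_nonpos (by linarith), abs_of_nonneg h,
        max_eq_right (by linarith)]; ring
    · rw [abs_of_nonneg (by linarith), abs_of_nonneg (by linarith),
        max_eq_left (abs_le.mpr ⟨by linarith, h'⟩)]; ring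

/-- Let `F : ℝ^{2N} → ℝ` be a multilinear function that maps `{±1}^{2N}`
into `[-1, 1]`. Then for every `z ∈ ℝ^{2N}`, `|F z| ≤ ∏ i, max 1 |z i|`. -/
theorem stmt6 (N : ℕ) (F : (Fin (2 * N) → ℝ) → ℝ) (hF : IsMultilinear F)
    (hb : ∀ z : Fin (2 * N) → ℝ, (∀ i, z i = 1 ∨ z i = -1) → |F z| ≤ 1)
    (z : Fin (2 * N) → ℝ) :
    |F z| ≤ ∏ i, max 1 |z i| := by
  have key : ∀ S : Finset (Fin (2 * N)), ∀ z : Fin (2 * N) → ℝ,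
      (∀ i ∉ S, z i = 1 ∨ z i = -1) → |F z| ≤ ∏ i ∈ S, max 1 |z i| := by
    intro S
    induction S using Finset.induction_on with
    | empty =>
      intro z hz
      simpa using hb z fun i => hz i (Finset.notMem_empty i)
    | @insert a S ha ih =>
      intro z hz
      have hM0 : (0 : ℝ) ≤ ∏ i ∈ S, max 1 |z i| :=
        Finset.prod_nonneg fun i _ => le_trans zero_le_one (le_max_left _ _)
      have hupd : ∀ u : ℝ, (u = 1 ∨ u = -1) →
          |F (Function.update z a u)| ≤ ∏ i ∈ S, max 1 |z i| := by
        intro u hu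
        have h1 : |F (Function.update z a u)| ≤ ∏ i ∈ S, max 1 |Function.update z a u i| := by
          refine ih _ fun i hi => ?_
          by_cases hia : i = a
          · subst hia; rw [Function.update_self]; exact hu
          · rw [Function.update_of_ne hia]
            exact hz i (by simp [hia, hi])
        refine h1.trans_eq (Finset.prod_congr rfl fun i hi => ?_)
        rw [Function.update_of_ne (fun h : i = a => ha (h ▸ hi))]
      have hz' : z = Function.update z a (z a) := (Function.update_eq_self a z).symm
      rw [hz', affine_combo F hF z a (z a)]
      calc |(1 + z a) / 2 * F (Function.update z a 1) +
            (1 - z a) / 2 * F (Function.update z a (-1))|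
          ≤ |(1 + z a) / 2| * |F (Function.update z a 1)| +
            |(1 - z a) / 2| * |F (Function.update z a (-1))| := by
            rw [← abs_mul, ← abs_mul]; exact abs_add_le _ _
        _ ≤ |(1 + z a) / 2| * (∏ i ∈ S, max 1 |z i|) +
            |(1 - z a) / 2| * (∏ i ∈ S, max 1 |z i|) := by
            gcongr
            · exact hupd 1 (Or.inl rfl)
            · exact hupd (-1) (Or.inr rfl)
        _ = max 1 |z a| * ∏ i ∈ S, max 1 |z i| := by
            rw [← add_mul, abs_combo]
        _ = max 1 |Function.update z a (z a) a| *
            ∏ i ∈ S, max 1 |Function.update z a (z a) i| := by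
            rw [Function.update_eq_self]
        _ = ∏ i ∈ insert a S, max 1 |Function.update z a (z a) i| := by
            rw [Finset.prod_insert ha]
  exact key Finset.univ z fun i hi => absurd (Finset.mem_univ i) hi
end
end

section
/- Let f be a multilinear function on ℝ^N and let x ∈ [−1/2, 1/2]^N. Then there exists a probability distribution R_x over restrictions ρ = (S, w) (with S ⊆ [N] and w ∈ {−1,1}^{[N]∖S}) such that for every y ∈ ℝ^N: f(x + y) − f(x) = E_{ρ ~ R_x}[ f_ρ(2·y) − f_ρ(0) ]. -/
open MeasureTheory ProbabilityTheory Finset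

noncomputable section

/-!
Choose the coordinates of `ρ` independently: `i ∈ S` with probability `1/2`, and otherwise
`w i = ±1` with probabilities `(1 ± 2 x i)/4`. For any `v`, the point `z` with `z i = v i` on `S`
and `z i = w i` off `S` then has independent coordinates of mean `x i + v i / 2`, and a multilinear
function commutes with expectation over independent coordinates, so `E f(z) = f(x + v/2)`.
Taking `v = 2 y` and `v = 0` gives the two terms.
-/

section ProductWeights

variable {ι α : Type*} [Fintype ι] [DecidableEq ι] [Fintype α]

theorem sum_prod_weight_mul_prod {p : ι → α → ℝ} (hp : ∀ i, ∑ a, p i a = 1)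
    (g : ι → α → ℝ) (S : Finset ι) :
    ∑ a : ι → α, (∏ i, p i (a i)) * ∏ i ∈ S, g i (a i) = ∏ i ∈ S, ∑ a, p i a * g i a := by
  calc ∑ a : ι → α, (∏ i, p i (a i)) * ∏ i ∈ S, g i (a i)
      = ∑ a : ι → α, ∏ i, p i (a i) * (if i ∈ S then g i (a i) else 1) := by
        refine Finset.sum_congr rfl fun a _ => ?_
        rw [Finset.prod_mul_distrib, Fintype.prod_ite_mem]
    _ = ∏ i, ∑ a, p i a * (if i ∈ S then g i a else 1) :=
        (Fintype.prod_sum fun i a => p i a * if i ∈ S then g i a else 1).symm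
    _ = ∏ i ∈ S, ∑ a, p i a * g i a := by
        rw [← Fintype.prod_ite_mem S]
        refine Finset.prod_congr rfl fun i _ => ?_
        split_ifs <;> simp [hp]

theorem IsMultilinear.sum_prod_weight_mul {F : (ι → ℝ) → ℝ} (hF : IsMultilinear F)
    {p : ι → α → ℝ} (hp : ∀ i, ∑ a, p i a = 1) (g : ι → α → ℝ) :
    ∑ a : ι → α, (∏ i, p i (a i)) * F (fun i => g i (a i))
      = F (fun i => ∑ a, p i a * g i a) := by
  obtain ⟨c, hc⟩ := hF
  simp_rw [hc, Finset.mul_sum, mul_left_comm _ (c _)]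
  rw [Finset.sum_comm]
  simp_rw [← Finset.mul_sum, sum_prod_weight_mul_prod hp]

end ProductWeights

theorem sum_prod_arrow_eq_sum_arrow_prod {ι β γ M : Type*} [Fintype ι] [DecidableEq ι]
    [Fintype β] [Fintype γ] [AddCommMonoid M] (G : (ι → β × γ) → M) :
    ∑ ρ : (ι → β) × (ι → γ), G (fun i => (ρ.1 i, ρ.2 i)) = ∑ a : ι → β × γ, G a :=
  Fintype.sum_equiv (Equiv.arrowProdEquivProdArrow ι (fun _ => β) (fun _ => γ)).symm _ _
    fun _ => rfl

section RandomRestriction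

variable {ι : Type*} (x : ι → ℝ)

/-- Probability that coordinate `i` of the random restriction is `b = (i ∈ S, w i = 1)`. -/
def restrictionWeight (i : ι) : Bool × Bool → ℝ
  | (true, _) => 1 / 4
  | (false, true) => (1 + 2 * x i) / 4
  | (false, false) => (1 - 2 * x i) / 4

theorem restrictionWeight_nonneg (hx : ∀ i, |x i| ≤ 1 / 2) (i : ι) (b : Bool × Bool) :
    0 ≤ restrictionWeight x i b := by
  obtain ⟨hlo, hhi⟩ := abs_le.1 (hx i)
  rcases b with ⟨_ | _, _ | _⟩ <;> simp only [restrictionWeight] <;> linarith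

theorem sum_restrictionWeight (i : ι) : ∑ b, restrictionWeight x i b = 1 := by
  simp only [Fintype.sum_prod_type, Fintype.sum_bool, restrictionWeight]
  ring

theorem sum_restrictionWeight_mul (i : ι) (v : ℝ) :
    ∑ b, restrictionWeight x i b * (if b.1 then v else if b.2 then 1 else -1) = x i + v / 2 := by
  simp only [Fintype.sum_prod_type, Fintype.sum_bool, restrictionWeight, Bool.false_eq_true,
    if_true, if_false]
  ring

variable [Fintype ι] [DecidableEq ι]

theorem sum_prod_restrictionWeight_mul {F : (ι → ℝ) → ℝ} (hF : IsMultilinear F) (v : ι → ℝ) :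
    ∑ ρ : (ι → Bool) × (ι → Bool), (∏ i, restrictionWeight x i (ρ.1 i, ρ.2 i)) *
        F (fun i => if ρ.1 i then v i else if ρ.2 i then 1 else -1)
      = F (fun i => x i + v i / 2) := by
  rw [sum_prod_arrow_eq_sum_arrow_prod fun a : ι → Bool × Bool =>
      (∏ i, restrictionWeight x i (a i)) *
        F (fun i => if (a i).1 then v i else if (a i).2 then 1 else -1),
    hF.sum_prod_weight_mul (sum_restrictionWeight x)
      fun i b => if b.1 then v i else if b.2 then 1 else -1]
  simp_rw [sum_restrictionWeight_mul]

theorem sum_prod_restrictionWeight :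
    ∑ ρ : (ι → Bool) × (ι → Bool), ∏ i, restrictionWeight x i (ρ.1 i, ρ.2 i) = 1 := by
  rw [sum_prod_arrow_eq_sum_arrow_prod fun a : ι → Bool × Bool =>
      ∏ i, restrictionWeight x i (a i), ← Fintype.prod_sum]
  simp_rw [sum_restrictionWeight, Finset.prod_const_one]

def restrictionPMF (hx : ∀ i, |x i| ≤ 1 / 2) : PMF ((ι → Bool) × (ι → Bool)) :=
  PMF.ofFintype (fun ρ => ENNReal.ofReal (∏ i, restrictionWeight x i (ρ.1 i, ρ.2 i))) <| by
    rw [← ENNReal.ofReal_sum_of_nonneg fun ρ _ =>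
        Finset.prod_nonneg fun i _ => restrictionWeight_nonneg x hx i _,
      sum_prod_restrictionWeight, ENNReal.ofReal_one]

theorem restrictionPMF_toReal (hx : ∀ i, |x i| ≤ 1 / 2) (ρ : (ι → Bool) × (ι → Bool)) :
    (restrictionPMF x hx ρ).toReal = ∏ i, restrictionWeight x i (ρ.1 i, ρ.2 i) :=
  ENNReal.toReal_ofReal <| Finset.prod_nonneg fun i _ => restrictionWeight_nonneg x hx i _

end RandomRestriction

/-- A restriction `ρ = (S, w)` is encoded as a pair of Boolean vectors: `S = {i | ρ.1 i}` and
`w i = ±1` according to `ρ.2 i`, relevant only off `S`. -/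
theorem stmt9 (N : ℕ) (f : (Fin N → ℝ) → ℝ) (hf : IsMultilinear f)
    (x : Fin N → ℝ) (hx : ∀ i, |x i| ≤ 1 / 2) :
    ∃ μ : PMF ((Fin N → Bool) × (Fin N → Bool)),
      ∀ y : Fin N → ℝ,
        f (x + y) - f x =
          ∑ ρ : (Fin N → Bool) × (Fin N → Bool), (μ ρ).toReal *
            (f (fun i => if ρ.1 i then 2 * y i else if ρ.2 i then 1 else -1) -
             f (fun i => if ρ.1 i then 0 else if ρ.2 i then 1 else -1)) := by
  refine ⟨restrictionPMF x hx, fun y => ?_⟩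
  simp_rw [restrictionPMF_toReal, mul_sub, Finset.sum_sub_distrib,
    sum_prod_restrictionWeight_mul x hf]
  congr 2 <;> funext i <;> simp
end
end

section
/- There exists a universal constant K such that the following holds. Let t ≥ 1, let Y ∈ [−1/2, 1/2]^N be fixed, let ΔX be a centered Gaussian vector on ℝ^N with covariance (ε/t)·I_N, let ΔY = H·ΔX, and let ΔY' = 2·Y∘ΔY + ΔY∘ΔY − (ε/t)·𝟙. Then: (i) for all i ≠ j, Cov((ΔX)_i, (ΔX)_j) = 0; (ii) for all i, j ∈ [N], |Cov(2(ΔX)_i, 2(ΔY')_j)| ≤ 4ε/(t√N) + K·t^{−3/2}; and (iii) for all i ≠ j, |Cov(2(ΔY')_i, 2(ΔY')_j)| ≤ K·t^{−3/2}. -/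
/-!
The coordinates of `ΔX` are i.i.d. `N(0, ε/t)`, so linear images of `ΔX` are jointly Gaussian
with `Cov((A ΔX)_p, (B ΔX)_q) = (ε/t) (A Bᵀ)_{pq}`. As `H Hᵀ = I`, for `i ≠ j` the coordinates
`ΔY_i` and `ΔY_j` are uncorrelated, hence independent, and so are `ΔY'_i` and `ΔY'_j`: (iii) holds
with `K = 0`. In (ii) the law of `ΔX` is symmetric, `ΔX_i` is odd and `ΔY_j² - ε/t` is even in
`ΔX`, so only the linear part `2 Y_j ΔY_j` of `ΔY'_j` contributes, giving exactly
`Cov(2ΔX_i, 2ΔY'_j) = 8 Y_j (ε/t) H_{ji}`.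
-/

open MeasureTheory ProbabilityTheory Finset

noncomputable section

/-- Covariance of two real random variables under a measure. -/
def cov {α : Type*} [MeasurableSpace α] (μ : Measure α) (f g : α → ℝ) : ℝ :=
  (∫ ω, f ω * g ω ∂μ) - (∫ ω, f ω ∂μ) * ∫ ω, g ω ∂μ

/-- The centered Gaussian vector `ΔX` on `ℝ^N` with covariance `(ε/t)·I_N`. -/
def gaussStep (C : ℝ) (n : ℕ) (t : ℝ) : Measure (BV n → ℝ) :=
  Measure.pi fun _ => gaussianReal 0 (eps C n / t).toNNReal

/-- `ΔY' = 2 Y ∘ ΔY + ΔY ∘ ΔY - (ε/t) 𝟙` where `ΔY = H · ΔX`. -/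
def dY' (C : ℝ) (n : ℕ) (t : ℝ) (Y : BV n → ℝ) (dX : BV n → ℝ) : BV n → ℝ :=
  fun i => 2 * Y i * (Had n).mulVec dX i + ((Had n).mulVec dX i) ^ 2 - eps C n / t

open scoped NNReal Matrix

section Symmetric

variable {E : Type*} [MeasurableSpace E] [InvolutiveNeg E] [MeasurableNeg E] {μ : Measure E}

lemma integral_eq_zero_of_odd (hμ : μ.map (fun x ↦ -x) = μ) {f : E → ℝ}
    (hf : ∀ x, f (-x) = -f x) : ∫ x, f x ∂μ = 0 := by
  have h := (MeasurePreserving.mk (f := MeasurableEquiv.neg E) measurable_neg hμ).integral_comp' f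
  simp only [MeasurableEquiv.neg_apply, hf, integral_neg] at h
  linarith

lemma covariance_eq_zero_of_odd_of_even (hμ : μ.map (fun x ↦ -x) = μ) {f g : E → ℝ}
    (hf : ∀ x, f (-x) = -f x) (hg : ∀ x, g (-x) = g x) : cov[f, g; μ] = 0 := by
  rw [covariance, integral_eq_zero_of_odd hμ hf]
  exact integral_eq_zero_of_odd hμ fun x ↦ by rw [hf, hg]; ring

end Symmetric

section Cov

variable {Ω : Type*} [MeasurableSpace Ω] {μ : Measure Ω} {f g : Ω → ℝ}

lemma cov_eq_covariance [IsProbabilityMeasure μ] (hf : MemLp f 2 μ) (hg : MemLp g 2 μ) :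
    cov μ f g = cov[f, g; μ] := by
  rw [covariance_eq_sub hf hg]
  rfl

lemma cov_eq_zero_of_indepFun (h : f ⟂ᵢ[μ] g) (hf : AEStronglyMeasurable f μ)
    (hg : AEStronglyMeasurable g μ) : cov μ f g = 0 := by
  rw [cov, h.integral_fun_mul_eq_mul_integral hf hg, sub_self]

end Cov

lemma ProbabilityTheory.HasGaussianLaw.memLp_two_sq {Ω : Type*} [MeasurableSpace Ω]
    {P : Measure Ω} {X : Ω → ℝ} (hX : HasGaussianLaw X P) : MemLp (fun ω ↦ X ω ^ 2) 2 P := by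
  rw [memLp_two_iff_integrable_sq (hX.aemeasurable.pow_const 2).aestronglyMeasurable]
  simpa [← pow_mul, Even.pow_abs ⟨2, rfl⟩] using
    (hX.memLp (p := 4) (by simp)).integrable_norm_pow (by norm_num)

section ProductGaussian

variable {ι : Type*} [Fintype ι] (v : ℝ≥0)

lemma hasGaussianLaw_pi_gaussianReal {F : Type*} [NormedAddCommGroup F] [NormedSpace ℝ F]
    [MeasurableSpace F] [BorelSpace F] (L : (ι → ℝ) →L[ℝ] F) :
    HasGaussianLaw L (Measure.pi fun _ : ι ↦ gaussianReal 0 v) := by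
  have hid : HasGaussianLaw (fun x : ι → ℝ ↦ x) (Measure.pi fun _ : ι ↦ gaussianReal 0 v) :=
    (iIndepFun_pi (X := fun _ ↦ id) fun _ ↦ aemeasurable_id).hasGaussianLaw fun i ↦
      (measurePreserving_eval (fun _ : ι ↦ gaussianReal 0 v) i).hasLaw.hasGaussianLaw
  exact hid.map L

lemma hasGaussianLaw_mulVec_pi_gaussianReal {κ : Type*} [Fintype κ] (A : Matrix κ ι ℝ) :
    HasGaussianLaw (fun x ↦ A *ᵥ x) (Measure.pi fun _ : ι ↦ gaussianReal 0 v) :=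
  hasGaussianLaw_pi_gaussianReal v A.mulVecLin.toContinuousLinearMap

lemma hasGaussianLaw_eval_pi_gaussianReal (i : ι) :
    HasGaussianLaw (fun x : ι → ℝ ↦ x i) (Measure.pi fun _ : ι ↦ gaussianReal 0 v) :=
  hasGaussianLaw_pi_gaussianReal v (ContinuousLinearMap.proj i)

lemma map_neg_pi_gaussianReal :
    (Measure.pi fun _ : ι ↦ gaussianReal 0 v).map (fun x ↦ -x) =
      Measure.pi fun _ : ι ↦ gaussianReal 0 v := by
  have h := Measure.pi_map_pi (μ := fun _ : ι ↦ gaussianReal 0 v) (f := fun _ (y : ℝ) ↦ -y)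
    fun _ ↦ measurable_neg.aemeasurable
  rw [show (fun x : ι → ℝ ↦ -x) = fun x i ↦ -x i from rfl, h]
  simp [gaussianReal_map_neg]

lemma covariance_eval_pi_gaussianReal [DecidableEq ι] (k l : ι) :
    cov[fun x ↦ x k, fun x ↦ x l; Measure.pi fun _ : ι ↦ gaussianReal 0 v] =
      if k = l then (v : ℝ) else 0 := by
  split_ifs with hkl
  · subst hkl
    rw [covariance_self (measurable_pi_apply k).aemeasurable,
      (measurePreserving_eval (fun _ : ι ↦ gaussianReal 0 v) k).hasLaw.variance_eq,
      variance_id_gaussianReal]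
  · exact ((iIndepFun_pi (X := fun _ ↦ id) fun _ ↦ aemeasurable_id).indepFun hkl
      ).covariance_eq_zero (hasGaussianLaw_eval_pi_gaussianReal v k).memLp_two
      (hasGaussianLaw_eval_pi_gaussianReal v l).memLp_two

lemma covariance_mulVec_pi_gaussianReal {κ κ' : Type*} (A : Matrix κ ι ℝ) (B : Matrix κ' ι ℝ)
    (p : κ) (q : κ') :
    cov[fun x ↦ (A *ᵥ x) p, fun x ↦ (B *ᵥ x) q; Measure.pi fun _ : ι ↦ gaussianReal 0 v] =
      v * (A * Bᵀ) p q := by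
  classical
  simp only [Matrix.mulVec, dotProduct, Matrix.mul_apply, Matrix.transpose_apply]
  rw [covariance_fun_sum_fun_sum
    (fun k ↦ (hasGaussianLaw_eval_pi_gaussianReal v k).memLp_two.const_mul _)
    (fun l ↦ (hasGaussianLaw_eval_pi_gaussianReal v l).memLp_two.const_mul _)]
  simp_rw [covariance_const_mul_left, covariance_const_mul_right,
    covariance_eval_pi_gaussianReal, mul_ite, mul_zero, Finset.sum_ite_eq, Finset.mem_univ,
    if_true, Finset.mul_sum]
  exact Finset.sum_congr rfl fun k _ ↦ by ring

lemma indepFun_mulVec_pi_gaussianReal {κ : Type*} [Fintype κ] (A : Matrix κ ι ℝ) {p q : κ}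
    (h : (A * Aᵀ) p q = 0) :
    (fun x ↦ (A *ᵥ x) p) ⟂ᵢ[Measure.pi fun _ : ι ↦ gaussianReal 0 v] (fun x ↦ (A *ᵥ x) q) :=
  ((hasGaussianLaw_mulVec_pi_gaussianReal v A).prodMk p q).indepFun_of_covariance_eq_zero
    (by rw [covariance_mulVec_pi_gaussianReal, h, mul_zero])

lemma memLp_two_quadratic_mulVec_pi_gaussianReal {κ : Type*} [Fintype κ] (A : Matrix κ ι ℝ)
    (p : κ) (c d : ℝ) :
    MemLp (fun x ↦ c * (A *ᵥ x) p + (A *ᵥ x) p ^ 2 - d) 2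
      (Measure.pi fun _ : ι ↦ gaussianReal 0 v) :=
  have hL := (hasGaussianLaw_mulVec_pi_gaussianReal v A).eval p
  ((hL.memLp_two.const_mul c).add hL.memLp_two_sq).sub (memLp_const d)

lemma covariance_eval_quadratic_mulVec_pi_gaussianReal {κ : Type*} [Fintype κ]
    (A : Matrix κ ι ℝ) (i : ι) (p : κ) (c d : ℝ) :
    cov[fun x ↦ x i, fun x ↦ c * (A *ᵥ x) p + (A *ᵥ x) p ^ 2 - d;
      Measure.pi fun _ : ι ↦ gaussianReal 0 v] = c * v * A p i := by
  classical
  have hL := (hasGaussianLaw_mulVec_pi_gaussianReal v A).eval p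
  have hsplit : (fun x ↦ c * (A *ᵥ x) p + (A *ᵥ x) p ^ 2 - d) =
      (fun x ↦ c * (A *ᵥ x) p) + fun x ↦ (A *ᵥ x) p ^ 2 - d := by
    ext x; simp only [Pi.add_apply]; ring
  have hlin : cov[fun x ↦ x i, fun x ↦ (A *ᵥ x) p; Measure.pi fun _ : ι ↦ gaussianReal 0 v] =
      v * A p i := by
    simpa using covariance_mulVec_pi_gaussianReal v 1 A i p
  have hquad : cov[fun x ↦ x i, fun x ↦ (A *ᵥ x) p ^ 2 - d;
      Measure.pi fun _ : ι ↦ gaussianReal 0 v] = 0 :=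
    covariance_eq_zero_of_odd_of_even (map_neg_pi_gaussianReal v) (fun _ ↦ rfl)
      fun x ↦ by rw [Matrix.mulVec_neg, Pi.neg_apply, neg_sq]
  rw [hsplit, covariance_add_right (Z := fun x ↦ (A *ᵥ x) p ^ 2 - d)
    (hasGaussianLaw_eval_pi_gaussianReal v i).memLp_two
    (hL.memLp_two.const_mul c) (hL.memLp_two_sq.sub (memLp_const d)),
    covariance_const_mul_right, hlin, hquad]
  ring

end ProductGaussian

lemma neg_one_pow_bip {n : ℕ} (x y : BV n) :
    (-1 : ℝ) ^ bip x y = ∏ k, if x k && y k then -1 else 1 := by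
  rw [bip, ← Finset.prod_const, Finset.prod_filter]

lemma sum_neg_one_pow_bip_mul {n : ℕ} (x x' : BV n) :
    ∑ y, (-1 : ℝ) ^ bip x y * (-1) ^ bip x' y = if x = x' then 2 ^ n else 0 := by
  have hcoord : ∀ k, ∑ b : Bool, (if x k && b then (-1 : ℝ) else 1) *
      (if x' k && b then -1 else 1) = if x k = x' k then 2 else 0 := by
    intro k
    cases x k <;> cases x' k <;> norm_num
  simp_rw [neg_one_pow_bip, ← Finset.prod_mul_distrib]
  rw [← Fintype.prod_sum (fun k b ↦ (if x k && b then (-1 : ℝ) else 1) *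
    (if x' k && b then -1 else 1))]
  simp_rw [hcoord, Finset.prod_ite_zero, funext_iff]
  simp

lemma had_mul_transpose_had (n : ℕ) : Had n * (Had n)ᵀ = 1 := by
  have hN : Real.sqrt (2 ^ n) * Real.sqrt (2 ^ n) = 2 ^ n := Real.mul_self_sqrt (by positivity)
  ext i j
  simp only [Matrix.mul_apply, Matrix.transpose_apply, Had, Matrix.of_apply, div_mul_div_comm,
    hN, ← Finset.sum_div, sum_neg_one_pow_bip_mul, Matrix.one_apply]
  split_ifs <;> simp

lemma abs_had {n : ℕ} (i j : BV n) : |Had n i j| = (Real.sqrt (2 ^ n))⁻¹ := by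
  simp [Had, abs_div]

/-- There is a universal constant `K` such that: for `t ≥ 1`, fixed
`Y ∈ [-1/2, 1/2]^N`, `ΔX` centered Gaussian with covariance `(ε/t) I_N`,
`ΔY = H ΔX` and `ΔY' = 2 Y∘ΔY + ΔY∘ΔY - (ε/t)𝟙`:
(i) `Cov(ΔX_i, ΔX_j) = 0` for `i ≠ j`;
(ii) `|Cov(2 ΔX_i, 2 ΔY'_j)| ≤ 4ε/(t√N) + K t^{-3/2}` for all `i, j`;
(iii) `|Cov(2 ΔY'_i, 2 ΔY'_j)| ≤ K t^{-3/2}` for `i ≠ j`. -/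
theorem stmt10 :
    ∃ K : ℝ, ∀ C : ℝ, 20 ≤ C → ∀ n : ℕ, 1 ≤ n → ∀ t : ℝ, 1 ≤ t →
      ∀ Y : BV n → ℝ, (∀ i, |Y i| ≤ 1 / 2) →
        (∀ i j : BV n, i ≠ j →
          cov (gaussStep C n t) (fun dX => dX i) (fun dX => dX j) = 0) ∧
        (∀ i j : BV n,
          |cov (gaussStep C n t) (fun dX => 2 * dX i) (fun dX => 2 * dY' C n t Y dX j)|
            ≤ 4 * eps C n / (t * Real.sqrt (2 ^ n)) + K * t ^ (-(3 : ℝ) / 2)) ∧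
        (∀ i j : BV n, i ≠ j →
          |cov (gaussStep C n t) (fun dX => 2 * dY' C n t Y dX i)
            (fun dX => 2 * dY' C n t Y dX j)| ≤ K * t ^ (-(3 : ℝ) / 2)) := by
  refine ⟨0, fun C hC n _ t ht Y hY => ?_⟩
  have hs : 0 ≤ eps C n / t :=
    div_nonneg (one_div_nonneg.2 (mul_nonneg (by linarith)
      (Real.log_nonneg (one_le_pow₀ (by norm_num))))) (by linarith)
  unfold gaussStep dY'
  set s := eps C n / t
  set v := s.toNNReal
  have hv : (v : ℝ) = s := Real.coe_toNNReal _ hs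
  refine ⟨fun i j hij ↦ ?_, fun i j ↦ ?_, fun i j hij ↦ ?_⟩
  · exact cov_eq_zero_of_indepFun
      ((iIndepFun_pi (X := fun _ ↦ id) fun _ ↦ aemeasurable_id).indepFun hij)
      (measurable_pi_apply i).aestronglyMeasurable (measurable_pi_apply j).aestronglyMeasurable
  · rw [cov_eq_covariance ((hasGaussianLaw_eval_pi_gaussianReal v i).memLp_two.const_mul 2)
      ((memLp_two_quadratic_mulVec_pi_gaussianReal v (Had n) j (2 * Y j) s).const_mul 2),
      covariance_const_mul_left, covariance_const_mul_right,
      covariance_eval_quadratic_mulVec_pi_gaussianReal, hv]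
    calc |2 * (2 * (2 * Y j * s * Had n j i))| = 8 * |Y j| * s * |Had n j i| := by
          simp only [abs_mul, abs_of_nonneg hs, abs_two]; ring
      _ ≤ 8 * (1 / 2) * s * (Real.sqrt (2 ^ n))⁻¹ := by
          rw [abs_had]; gcongr; exact hY j
      _ = 4 * eps C n / (t * Real.sqrt (2 ^ n)) + 0 * t ^ (-(3 : ℝ) / 2) := by
          rw [zero_mul, add_zero]; ring
  · have hindep := (indepFun_mulVec_pi_gaussianReal v (Had n)
      (by rw [had_mul_transpose_had, Matrix.one_apply_ne hij])).comp
      (φ := fun y ↦ 2 * (2 * Y i * y + y ^ 2 - s))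
      (ψ := fun y ↦ 2 * (2 * Y j * y + y ^ 2 - s)) (by fun_prop) (by fun_prop)
    simp only [Function.comp_def] at hindep
    rw [cov_eq_zero_of_indepFun hindep (Measurable.aestronglyMeasurable (by fun_prop))
      (Measurable.aestronglyMeasurable (by fun_prop)), abs_zero, zero_mul]
end
end
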